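/- Let L ∈ ℝ^{n×n} be the Laplacian of a connected undirected graph (symmetric positive semidefinite, zero row sums, nonpositive off-diagonal entries, with grounded Laplacian L[2:n] positive definite). For an attachment node i ∈ {1,…,n}, let L'ᵢ ∈ ℝ^{(n+3)×(n+3)} be the Laplacian obtained by attaching to node i a cluster consisting of one leaf (node n+1) and a path of length 2 (nodes n+2, n+3): L'ᵢ = [[L + 2eᵢeᵢᵀ, −eᵢ, −eᵢ, 0], [−eᵢᵀ, 1, 0, 0], [−eᵢᵀ, 0, 2, −1], [0, 0, −1, 1]]. Then L'ᵢ[2:n+3] is positive definite and Tr((L'ᵢ[2:n+3])⁻¹) ≥ C + 4, where C = min over j ∈ {1,…,n} of Tr(((L + 2eⱼeⱼᵀ)[2:n])⁻¹); equivalently, the controllability Gramian P = ½(L'ᵢ[2:n+3])⁻¹ satisfies Tr(P) ≥ (C+4)/2. -/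

import Mathlib

open Matrix

/-- The principal submatrix of `A` obtained by deleting the row and column
indexed by `i₀` (grounding at node `i₀`). -/
def dropIdx {m : Type*} (i₀ : m) (A : Matrix m m ℝ) :
    Matrix {i : m // i ≠ i₀} {i : m // i ≠ i₀} ℝ :=
  A.submatrix Subtype.val Subtype.val

/-- The Laplacian obtained from `L` by attaching to node `i` a cluster consisting of
one leaf (new node `0`) and a path of length 2 (new nodes `1`, `2`):
`[[L + 2eᵢeᵢᵀ, −eᵢ, −eᵢ, 0], [−eᵢᵀ, 1, 0, 0], [−eᵢᵀ, 0, 2, −1], [0, 0, −1, 1]]`. -/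
noncomputable def clusterAttach {n : ℕ} (L : Matrix (Fin n) (Fin n) ℝ) (i : Fin n) :
    Matrix (Fin n ⊕ Fin 3) (Fin n ⊕ Fin 3) ℝ :=
  Matrix.fromBlocks
    (L + (2 : ℝ) • Matrix.vecMulVec (Pi.single i 1) (Pi.single i 1))
    (Matrix.of fun (j : Fin n) (k : Fin 3) =>
      if k = 2 then (0 : ℝ) else -((Pi.single i 1 : Fin n → ℝ) j))
    (Matrix.of fun (k : Fin 3) (j : Fin n) =>
      if k = 2 then (0 : ℝ) else -((Pi.single i 1 : Fin n → ℝ) j))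
    !![1, 0, 0; 0, 2, -1; 0, -1, 1]

/-!
Grounding at node `0` and reordering, the matrix becomes a block matrix `[[A, B], [Bᵀ, D]]` with
`A = (L + 2eᵢeᵢᵀ)[2:n]` and `D` the block of the three cluster nodes. Since `B D⁻¹ Bᵀ = 2eᵢeᵢᵀ`,
the Schur complement of `D` is the grounded Laplacian `L[2:n]`, so the matrix is positive definite.
For positive definite `M`, `(M⁻¹)ₖₖ = max_y (2 yₖ - yᵀ M y)`; restricting `y` to vectors supported
on a principal block shows that the inverse of a principal submatrix has smaller diagonal entries.
Hence `Tr M⁻¹ ≥ Tr A⁻¹ + Tr D⁻¹ = Tr A⁻¹ + 4 ≥ C + 4`.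
-/

namespace Matrix

variable {m n : Type*} [Fintype m] [Fintype n]

theorem trace_submatrix_equiv {R : Type*} [AddCommMonoid R] (A : Matrix n n R) (e : m ≃ n) :
    (A.submatrix e e).trace = A.trace :=
  e.sum_comp fun j => A j j

theorem extend_zero_dotProduct {R : Type*} [NonUnitalNonAssocSemiring R] {f : m → n}
    (hf : Function.Injective f) (u : m → R) (v : n → R) :
    Function.extend f u 0 ⬝ᵥ v = u ⬝ᵥ (v ∘ f) := by
  classical
  rw [dotProduct, ← Finset.sum_subset (Finset.subset_univ (Finset.univ.map ⟨f, hf⟩)),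
    Finset.sum_map]
  · simp [dotProduct, hf.extend_apply]
  · intro a _ ha
    rw [Function.extend_apply' _ _ _ (by simpa using ha), Pi.zero_apply, zero_mul]

theorem extend_zero_dotProduct_mulVec_extend_zero {R : Type*} [CommSemiring R] {f : m → n}
    (hf : Function.Injective f) (M : Matrix n n R) (u : m → R) :
    Function.extend f u 0 ⬝ᵥ M *ᵥ Function.extend f u 0 = u ⬝ᵥ M.submatrix f f *ᵥ u := by
  rw [extend_zero_dotProduct hf]
  congr 1
  ext i
  simp only [Function.comp_apply, mulVec, dotProduct_comm (M (f i)), extend_zero_dotProduct hf]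
  exact dotProduct_comm _ _

theorem PosDef.isGreatest_inv_apply [DecidableEq n] {M : Matrix n n ℝ} (hM : M.PosDef) (k : n) :
    IsGreatest (Set.range fun y => 2 * y k - y ⬝ᵥ M *ᵥ y) (M⁻¹ k k) := by
  set u := M⁻¹ *ᵥ Pi.single k 1
  have hMu : M *ᵥ u = Pi.single k 1 := by
    rw [mulVec_mulVec, mul_nonsing_inv M ((isUnit_iff_isUnit_det M).mp hM.isUnit), one_mulVec]
  have huk : u k = M⁻¹ k k := by simp [u, mulVec_single]
  refine ⟨⟨u, by simp only [hMu, dotProduct_single, mul_one, huk]; ring⟩, ?_⟩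
  rintro _ ⟨y, rfl⟩
  have hMt : Mᵀ = M := by simpa using hM.isHermitian.eq
  have hcross : u ⬝ᵥ M *ᵥ y = y k := by
    rw [dotProduct_mulVec, ← mulVec_transpose, hMt, hMu, single_dotProduct, one_mul]
  have := hM.posSemidef.dotProduct_mulVec_nonneg (u - y)
  simp only [star_trivial, mulVec_sub, dotProduct_sub, sub_dotProduct, hcross, hMu,
    dotProduct_single, mul_one, Pi.sub_apply, huk] at this
  dsimp only
  linarith

theorem PosDef.inv_submatrix_apply_le [DecidableEq m] [DecidableEq n] {M : Matrix n n ℝ}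
    (hM : M.PosDef) {f : m → n} (hf : Function.Injective f) (k : m) :
    (M.submatrix f f)⁻¹ k k ≤ M⁻¹ (f k) (f k) := by
  obtain ⟨u, hu⟩ := ((hM.submatrix hf).isGreatest_inv_apply k).1
  have := (hM.isGreatest_inv_apply (f k)).2 ⟨Function.extend f u 0, rfl⟩
  rw [← hu]
  simpa only [hf.extend_apply, extend_zero_dotProduct_mulVec_extend_zero hf] using this

theorem PosDef.trace_inv_add_trace_inv_le_trace_inv_fromBlocks [DecidableEq m] [DecidableEq n]
    {A : Matrix m m ℝ} {B : Matrix m n ℝ} {C : Matrix n m ℝ} {D : Matrix n n ℝ}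
    (h : (fromBlocks A B C D).PosDef) :
    A⁻¹.trace + D⁻¹.trace ≤ (fromBlocks A B C D)⁻¹.trace := by
  rw [trace, trace, trace, Fintype.sum_sum_type]
  exact add_le_add (Finset.sum_le_sum fun k _ => h.inv_submatrix_apply_le Sum.inl_injective k)
    (Finset.sum_le_sum fun k _ => h.inv_submatrix_apply_le Sum.inr_injective k)

open scoped ComplexOrder in
theorem PosDef.fromBlocks₂₂_of_schur {𝕜 : Type*} [RCLike 𝕜] [DecidableEq n]
    {A : Matrix m m 𝕜} {B : Matrix m n 𝕜} {D : Matrix n n 𝕜}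
    (hD : D.PosDef) (hS : (A - B * D⁻¹ * Bᴴ).PosDef) : (fromBlocks A B Bᴴ D).PosDef := by
  classical
  let _ := hD.isUnit.invertible
  have hpsd := (PosDef.fromBlocks₂₂ A B hD).2 hS.posSemidef
  rw [hpsd.posDef_iff_det_ne_zero, det_fromBlocks₂₂, invOf_eq_nonsing_inv]
  exact mul_ne_zero ((isUnit_iff_isUnit_det D).mp hD.isUnit).ne_zero
    ((isUnit_iff_isUnit_det _).mp hS.isUnit).ne_zero

end Matrix

def Equiv.subtypeSumNeInl {α β : Type*} (a : α) :
    {x : α ⊕ β // x ≠ Sum.inl a} ≃ {x : α // x ≠ a} ⊕ β :=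
  Equiv.subtypeSum.trans <| Equiv.sumCongr
    (Equiv.subtypeEquivRight fun _ => Sum.inl_injective.ne_iff)
    (Equiv.subtypeUnivEquiv fun _ => Sum.inr_ne_inl)

def clusterBlock : Matrix (Fin 3) (Fin 3) ℝ := !![1, 0, 0; 0, 2, -1; 0, -1, 1]

def clusterCoupling {ι : Type*} (v : ι → ℝ) : Matrix ι (Fin 3) ℝ :=
  of fun j k => if k = 2 then 0 else -v j

theorem clusterBlock_inv : clusterBlock⁻¹ = !![1, 0, 0; 0, 1, 1; 0, 1, 2] := by
  refine inv_eq_right_inv ?_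
  rw [clusterBlock, mul_fin_three, one_fin_three]
  norm_num

theorem trace_clusterBlock_inv : clusterBlock⁻¹.trace = 4 := by
  simp [clusterBlock_inv, trace_fin_three]
  norm_num

theorem clusterBlock_posDef : clusterBlock.PosDef := by
  -- `clusterBlock = Rᵀ R`
  let R : Matrix (Fin 3) (Fin 3) ℝ := !![1, 0, 0; 0, 1, -1; 0, 1, 0]
  have hR : IsUnit R := by simp [R, isUnit_iff_isUnit_det, det_fin_three]
  convert PosDef.one.conjTranspose_mul_mul_same (mulVec_injective_of_isUnit hR)
  ext i j
  fin_cases i <;> fin_cases j <;>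
    simp [R, clusterBlock, mul_apply, Fin.sum_univ_three, cons_val, one_add_one_eq_two]

theorem clusterCoupling_mul_clusterBlock_inv_mul {ι : Type*} [Fintype ι] (v : ι → ℝ) :
    clusterCoupling v * clusterBlock⁻¹ * (clusterCoupling v)ᴴ = (2 : ℝ) • vecMulVec v v := by
  ext j j'
  simp [clusterBlock_inv, clusterCoupling, mul_apply, Fin.sum_univ_three, vecMulVec_apply]
  ring

theorem dropIdx_add_smul_vecMulVec {m : Type*} (a : m) (L : Matrix m m ℝ) (c : ℝ) (v : m → ℝ) :
    dropIdx a (L + c • vecMulVec v v) =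
      dropIdx a L + c • vecMulVec (v ∘ Subtype.val) (v ∘ Subtype.val) :=
  rfl

variable {n : ℕ} {L : Matrix (Fin n) (Fin n) ℝ} {a : Fin n} (i : Fin n)

variable (L a) in
noncomputable def groundedClusterBlocks :
    Matrix ({j // j ≠ a} ⊕ Fin 3) ({j // j ≠ a} ⊕ Fin 3) ℝ :=
  fromBlocks (dropIdx a (L + (2 : ℝ) • vecMulVec (Pi.single i 1) (Pi.single i 1)))
    (clusterCoupling (Pi.single i 1 ∘ Subtype.val))
    (clusterCoupling (Pi.single i 1 ∘ Subtype.val))ᴴ clusterBlock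

theorem dropIdx_clusterAttach_eq_submatrix :
    dropIdx (Sum.inl a) (clusterAttach L i) =
      (groundedClusterBlocks L a i).submatrix (Equiv.subtypeSumNeInl a)
        (Equiv.subtypeSumNeInl a) := by
  ext ⟨_ | _, _⟩ ⟨_ | _, _⟩ <;> rfl

theorem posDef_groundedClusterBlocks (hground : (dropIdx a L).PosDef) :
    (groundedClusterBlocks L a i).PosDef := by
  refine PosDef.fromBlocks₂₂_of_schur clusterBlock_posDef ?_
  rw [clusterCoupling_mul_clusterBlock_inv_mul, dropIdx_add_smul_vecMulVec, add_sub_cancel_right]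
  exact hground

theorem posDef_dropIdx_clusterAttach (hground : (dropIdx a L).PosDef) :
    (dropIdx (Sum.inl a) (clusterAttach L i)).PosDef := by
  rw [dropIdx_clusterAttach_eq_submatrix]
  exact (posDef_groundedClusterBlocks i hground).submatrix (Equiv.subtypeSumNeInl a).injective

theorem trace_inv_add_four_le_trace_inv_clusterAttach (hground : (dropIdx a L).PosDef) :
    (dropIdx a (L + (2 : ℝ) • vecMulVec (Pi.single i 1) (Pi.single i 1)))⁻¹.trace + 4 ≤
      (dropIdx (Sum.inl a) (clusterAttach L i))⁻¹.trace := by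
  rw [dropIdx_clusterAttach_eq_submatrix, inv_submatrix_equiv, trace_submatrix_equiv,
    ← trace_clusterBlock_inv]
  exact (posDef_groundedClusterBlocks i hground).trace_inv_add_trace_inv_le_trace_inv_fromBlocks

theorem cluster_attach_gramian_bound_general {n : ℕ} (hn : 0 < n)
    (L : Matrix (Fin n) (Fin n) ℝ)
    (hground : (dropIdx (⟨0, hn⟩ : Fin n) L).PosDef)
    (i : Fin n) :
    (dropIdx (Sum.inl ⟨0, hn⟩ : Fin n ⊕ Fin 3) (clusterAttach L i)).PosDef ∧
    Matrix.trace ((dropIdx (Sum.inl ⟨0, hn⟩ : Fin n ⊕ Fin 3) (clusterAttach L i))⁻¹)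
      ≥ (Finset.univ.inf' ⟨⟨0, hn⟩, Finset.mem_univ _⟩ fun j : Fin n =>
          Matrix.trace ((dropIdx (⟨0, hn⟩ : Fin n)
            (L + (2 : ℝ) • Matrix.vecMulVec (Pi.single j 1) (Pi.single j 1)))⁻¹)) + 4 ∧
    Matrix.trace
        ((2 : ℝ)⁻¹ • (dropIdx (Sum.inl ⟨0, hn⟩ : Fin n ⊕ Fin 3) (clusterAttach L i))⁻¹)
      ≥ ((Finset.univ.inf' ⟨⟨0, hn⟩, Finset.mem_univ _⟩ fun j : Fin n =>
          Matrix.trace ((dropIdx (⟨0, hn⟩ : Fin n)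
            (L + (2 : ℝ) • Matrix.vecMulVec (Pi.single j 1) (Pi.single j 1)))⁻¹)) + 4) / 2 := by
  have hmin := Finset.inf'_le (fun j : Fin n => trace (dropIdx ⟨0, hn⟩
    (L + (2 : ℝ) • vecMulVec (Pi.single j 1) (Pi.single j 1)))⁻¹) (Finset.mem_univ i)
  have htrace := trace_inv_add_four_le_trace_inv_clusterAttach i hground
  refine ⟨posDef_dropIdx_clusterAttach i hground, by linarith, ?_⟩
  rw [trace_smul, smul_eq_mul]
  linarith

theorem cluster_attach_gramian_bound {n : ℕ} (hn : 0 < n)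
    (L : Matrix (Fin n) (Fin n) ℝ)
    (hsym : L.IsSymm) (hpsd : L.PosSemidef)
    (hrow : ∀ i, ∑ j, L i j = 0)
    (hoff : ∀ i j, i ≠ j → L i j ≤ 0)
    (hground : (dropIdx (⟨0, hn⟩ : Fin n) L).PosDef)
    (i : Fin n) :
    (dropIdx (Sum.inl ⟨0, hn⟩ : Fin n ⊕ Fin 3) (clusterAttach L i)).PosDef ∧
    Matrix.trace ((dropIdx (Sum.inl ⟨0, hn⟩ : Fin n ⊕ Fin 3) (clusterAttach L i))⁻¹)
      ≥ (Finset.univ.inf' ⟨⟨0, hn⟩, Finset.mem_univ _⟩ fun j : Fin n =>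
          Matrix.trace ((dropIdx (⟨0, hn⟩ : Fin n)
            (L + (2 : ℝ) • Matrix.vecMulVec (Pi.single j 1) (Pi.single j 1)))⁻¹)) + 4 ∧
    Matrix.trace
        ((2 : ℝ)⁻¹ • (dropIdx (Sum.inl ⟨0, hn⟩ : Fin n ⊕ Fin 3) (clusterAttach L i))⁻¹)
      ≥ ((Finset.univ.inf' ⟨⟨0, hn⟩, Finset.mem_univ _⟩ fun j : Fin n =>
          Matrix.trace ((dropIdx (⟨0, hn⟩ : Fin n)
            (L + (2 : ℝ) • Matrix.vecMulVec (Pi.single j 1) (Pi.single j 1)))⁻¹)) + 4) / 2 :=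
  cluster_attach_gramian_bound_general hn L hground i
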